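/- arXiv:2603.05774 — 11 statements merged into one kernel-verified Lean document; each statement's English description precedes it below -/
import Mathlib

section
/- For any vector x ∈ ℝ^n (n ≥ 1), the softmax mean is nondecreasing in the temperature parameter: if 0 ≤ α ≤ α', then m(x, α') ≥ m(x, α). Moreover, for each fixed x, the derivative of α ↦ m(x, α) at α equals the variance of x under the probability weights softmax(αx), i.e. ∂m(x,α)/∂α = ∑_i softmax(αx)_i·x_i² - (∑_i softmax(αx)_i·x_i)² ≥ 0. -/
open scoped BigOperators

/-- Softmax weights: `softmax(αx)_i = exp(α x_i) / ∑_j exp(α x_j)`. -/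
noncomputable def softmaxWeight {n : ℕ} (x : Fin n → ℝ) (α : ℝ) (i : Fin n) : ℝ :=
  Real.exp (α * x i) / ∑ j, Real.exp (α * x j)

/-- Softmax mean: `m(x, α) = ∑_i softmax(αx)_i · x_i`. -/
noncomputable def softmaxMean {n : ℕ} (x : Fin n → ℝ) (α : ℝ) : ℝ :=
  ∑ i, softmaxWeight x α i * x i

/-- **Monotonicity of the softmax mean in the temperature.**
For any `x ∈ ℝⁿ` (`n ≥ 1`): if `0 ≤ α ≤ α'` then `m(x, α') ≥ m(x, α)`; moreover for each
`α ≥ 0` the derivative of `β ↦ m(x, β)` at `α` equals the variance of `x` under the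
probability weights `softmax(αx)`, namely
`∑_i softmax(αx)_i x_i² - (∑_i softmax(αx)_i x_i)²`, which is nonnegative. -/
theorem softmaxMean_monotone_and_deriv {n : ℕ} (hn : 1 ≤ n) (x : Fin n → ℝ) :
    (∀ α α' : ℝ, 0 ≤ α → α ≤ α' → softmaxMean x α ≤ softmaxMean x α') ∧
    (∀ α : ℝ, 0 ≤ α →
      HasDerivAt (fun β => softmaxMean x β)
        ((∑ i, softmaxWeight x α i * (x i) ^ 2) -
          (∑ i, softmaxWeight x α i * x i) ^ 2) α ∧
      0 ≤ (∑ i, softmaxWeight x α i * (x i) ^ 2) -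
            (∑ i, softmaxWeight x α i * x i) ^ 2) := by
  have hne : Nonempty (Fin n) := ⟨⟨0, hn⟩⟩
  set S : ℝ → ℝ := fun α => ∑ j, Real.exp (α * x j) with hSdef
  set N : ℝ → ℝ := fun α => ∑ j, Real.exp (α * x j) * x j with hNdef
  set Q : ℝ → ℝ := fun α => ∑ j, Real.exp (α * x j) * (x j) ^ 2 with hQdef
  have hSpos : ∀ α, 0 < S α := fun α =>
    Finset.sum_pos (fun j _ => Real.exp_pos _) Finset.univ_nonempty
  have hSne : ∀ α, S α ≠ 0 := fun α => (hSpos α).ne'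
  have hw : ∀ α (i : Fin n), softmaxWeight x α i = Real.exp (α * x i) / S α := fun _ _ => rfl
  have hwnn : ∀ α (i : Fin n), 0 ≤ softmaxWeight x α i := fun α i => by
    rw [hw]; positivity
  have hSum1 : ∀ α, ∑ i, softmaxWeight x α i = 1 := by
    intro α
    simp only [hw]
    rw [← Finset.sum_div, div_self (hSne α)]
  have hmean : ∀ α, softmaxMean x α = N α / S α := by
    intro α
    simp only [softmaxMean, hw, hNdef, Finset.sum_div]
    exact Finset.sum_congr rfl fun i _ => by ring
  have hQS : ∀ α, ∑ i, softmaxWeight x α i * (x i) ^ 2 = Q α / S α := by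
    intro α
    simp only [hw, hQdef, Finset.sum_div]
    exact Finset.sum_congr rfl fun i _ => by ring
  have hDS : ∀ α, HasDerivAt S (N α) α := by
    intro α
    have h : ∀ j ∈ Finset.univ, HasDerivAt (fun β : ℝ => Real.exp (β * x j))
        (Real.exp (α * x j) * x j) α := by
      intro j _
      simpa using (((hasDerivAt_id α).mul_const (x j)).exp)
    simpa [hSdef, hNdef] using HasDerivAt.fun_sum h
  have hDN : ∀ α, HasDerivAt N (Q α) α := by
    intro α
    have h : ∀ j ∈ Finset.univ, HasDerivAt (fun β : ℝ => Real.exp (β * x j) * x j)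
        (Real.exp (α * x j) * (x j) ^ 2) α := by
      intro j _
      have := (((hasDerivAt_id α).mul_const (x j)).exp).mul_const (x j)
      simpa [sq, mul_assoc, mul_comm, mul_left_comm] using this
    simpa [hNdef, hQdef] using HasDerivAt.fun_sum h
  have hD : ∀ α, HasDerivAt (fun β => softmaxMean x β)
      ((∑ i, softmaxWeight x α i * (x i) ^ 2) - (∑ i, softmaxWeight x α i * x i) ^ 2) α := by
    intro α
    have hdiv := (hDN α).div (hDS α) (hSne α)
    have hfun : (fun β => softmaxMean x β) = fun β => N β / S β := funext hmean
    rw [hfun]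
    refine hdiv.congr_deriv ?_
    rw [hQS α, show (∑ i, softmaxWeight x α i * x i) = N α / S α from hmean α]
    field_simp
  have hVar : ∀ α, 0 ≤ (∑ i, softmaxWeight x α i * (x i) ^ 2) -
      (∑ i, softmaxWeight x α i * x i) ^ 2 := by
    intro α
    set m := ∑ i, softmaxWeight x α i * x i with hm
    have key : (∑ i, softmaxWeight x α i * (x i) ^ 2) - m ^ 2 =
        ∑ i, softmaxWeight x α i * (x i - m) ^ 2 := by
      have expand : ∀ i : Fin n, softmaxWeight x α i * (x i - m) ^ 2 =
          softmaxWeight x α i * (x i) ^ 2 - 2 * m * (softmaxWeight x α i * x i)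
            + m ^ 2 * softmaxWeight x α i := fun i => by ring
      rw [Finset.sum_congr rfl fun i _ => expand i]
      rw [Finset.sum_add_distrib, Finset.sum_sub_distrib, ← Finset.mul_sum, ← Finset.mul_sum,
        hSum1 α, ← hm]
      ring
    rw [key]
    exact Finset.sum_nonneg fun i _ => mul_nonneg (hwnn α i) (sq_nonneg _)
  constructor
  · intro α α' _ hle
    have hdiff : Differentiable ℝ (fun β => softmaxMean x β) :=
      fun β => (hD β).differentiableAt
    have hmono : Monotone (fun β => softmaxMean x β) := by
      apply monotone_of_deriv_nonneg hdiff
      intro β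
      rw [(hD β).deriv]
      exact hVar β
    exact hmono hle
  · intro α _
    exact ⟨hD α, hVar α⟩
end

section
/- For any vector x ∈ ℝ^n (n ≥ 1), any k > 0, and any α ≥ (ln n)/k, the softmax mean satisfies 0 ≤ max_{1≤i≤n} x_i - m(x, α) < k. -/
open scoped BigOperators

/-- Maximum entry of a vector `x ∈ ℝⁿ` (equal to `max_i x_i` whenever `n ≥ 1`). -/
noncomputable def vecMax {n : ℕ} (x : Fin n → ℝ) : ℝ :=
  if h : (Finset.univ : Finset (Fin n)).Nonempty then Finset.univ.sup' h x else 0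

/-- **Softmax mean approximates the maximum.**
For any `x ∈ ℝⁿ` (`n ≥ 1`), any `k > 0`, and any `α ≥ (ln n)/k`:
`0 ≤ max_i x_i - m(x, α) < k`. -/
theorem softmaxMean_max_gap {n : ℕ} (hn : 1 ≤ n) (x : Fin n → ℝ)
    (k : ℝ) (hk : 0 < k) (α : ℝ) (hα : Real.log n / k ≤ α) :
    0 ≤ vecMax x - softmaxMean x α ∧ vecMax x - softmaxMean x α < k := by
  have hne : (Finset.univ : Finset (Fin n)).Nonempty := by
    rw [Finset.univ_nonempty_iff]
    exact Fin.pos_iff_nonempty.mp hn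
  have hM : vecMax x = Finset.univ.sup' hne x := by simp [vecMax, hne]
  set M := Finset.univ.sup' hne x with hMdef
  have hle : ∀ i, x i ≤ M := fun i => Finset.le_sup' x (Finset.mem_univ i)
  obtain ⟨i0, _, hi0⟩ := Finset.exists_mem_eq_sup' hne x
  -- basic facts
  set S := ∑ j, Real.exp (α * x j) with hS
  have hSpos : 0 < S := Finset.sum_pos (fun j _ => Real.exp_pos _) hne
  set p : Fin n → ℝ := fun i => Real.exp (α * x i) / S with hp
  have hppos : ∀ i, 0 < p i := fun i => div_pos (Real.exp_pos _) hSpos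
  have hpsum : ∑ i, p i = 1 := by
    rw [hp]
    rw [← Finset.sum_div]
    exact div_self hSpos.ne'
  have hm : softmaxMean x α = ∑ i, p i * x i := rfl
  -- part 1: m ≤ M
  have hmle : softmaxMean x α ≤ M := by
    rw [hm]
    calc ∑ i, p i * x i ≤ ∑ i, p i * M := by
          apply Finset.sum_le_sum
          intro i _
          exact mul_le_mul_of_nonneg_left (hle i) (hppos i).le
      _ = M := by rw [← Finset.sum_mul, hpsum, one_mul]
  refine ⟨by rw [hM]; linarith, ?_⟩
  rcases eq_or_lt_of_le hn with h1 | h2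
  · -- n = 1
    have hMe : softmaxMean x α = M := by
      subst h1
      rw [hm, Fin.sum_univ_one, hMdef, hi0]
      have : p i0 = 1 := by
        have : i0 = 0 := Subsingleton.elim _ _
        rw [hp]
        subst this
        simp [hS, Fin.sum_univ_one]
      have hi00 : (0 : Fin 1) = i0 := Subsingleton.elim _ _
      rw [hi00, this, one_mul]
    rw [hM]; linarith
  · -- n ≥ 2
    have hlogn : 0 < Real.log n := by
      apply Real.log_pos
      exact_mod_cast h2
    have hαpos : 0 < α := lt_of_lt_of_le (div_pos hlogn hk) hα
    have hlognk : Real.log n ≤ α * k := by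
      rw [div_le_iff₀ hk] at hα; linarith
    -- entropy bound via Jensen
    have jensen : ∑ i, p i * Real.log (1 / p i) ≤ Real.log n := by
      have := ConcaveOn.le_map_sum (t := Finset.univ) (w := p)
        (p := fun i => 1 / p i) strictConcaveOn_log_Ioi.concaveOn
        (fun i _ => (hppos i).le) hpsum
        (fun i _ => Set.mem_Ioi.mpr (by positivity))
      simp only [smul_eq_mul] at this
      have hsum : ∑ i, p i * (1 / p i) = (n : ℝ) := by
        have h1 : ∀ i ∈ Finset.univ, p i * (1 / p i) = 1 := fun i _ => by
          field_simp
          exact div_self (hppos i).ne'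
        rw [Finset.sum_congr rfl h1]
        simp
      rwa [hsum] at this
    -- compute entropy = log S - α m
    have hcomp : ∑ i, p i * Real.log (1 / p i) = Real.log S - α * softmaxMean x α := by
      have hlogp : ∀ i, Real.log (1 / p i) = Real.log S - α * x i := by
        intro i
        rw [hp]
        rw [one_div, Real.log_inv, Real.log_div (Real.exp_ne_zero _) hSpos.ne',
          Real.log_exp]
        ring
      calc ∑ i, p i * Real.log (1 / p i)
          = ∑ i, (p i * Real.log S - α * (p i * x i)) := by
            apply Finset.sum_congr rfl
            intro i _
            rw [hlogp i]; ring
        _ = Real.log S - α * softmaxMean x α := by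
            rw [Finset.sum_sub_distrib, ← Finset.sum_mul, hpsum, one_mul,
              ← Finset.mul_sum, hm]
    -- S > exp(α M)
    have hnt : Nontrivial (Fin n) := Fin.nontrivial_iff_two_le.mpr h2
    obtain ⟨j, hj⟩ := exists_ne i0
    have hSgt : Real.exp (α * M) < S := by
      have hMi0 : M = x i0 := by rw [hMdef, hi0]
      rw [hMi0]
      show Real.exp (α * x i0) < ∑ j, Real.exp (α * x j)
      exact Finset.single_lt_sum (f := fun i => Real.exp (α * x i)) hj (Finset.mem_univ i0) (Finset.mem_univ j)
        (Real.exp_pos _) (fun k _ _ => (Real.exp_pos _).le)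
    have hlogS : α * M < Real.log S := by
      have := Real.log_lt_log (Real.exp_pos _) hSgt
      rwa [Real.log_exp] at this
    have : α * M < α * softmaxMean x α + α * k := by
      calc α * M < Real.log S := hlogS
        _ ≤ α * softmaxMean x α + Real.log n := by linarith [jensen, hcomp.symm.le, hcomp.le]
        _ ≤ α * softmaxMean x α + α * k := by linarith
    rw [hM]
    nlinarith
end

section
/- Let x, δ ∈ ℝ^n (n ≥ 1), let k > 0, and let α ≥ (ln n)/k. Then the perturbed-softmax deviation bound holds: max_{1≤i≤n} x_i - ∑_{i=1}^n softmax(α(x+δ))_i · x_i ≤ 2‖δ‖_∞ + k, where ‖δ‖_∞ = max_i |δ_i|. -/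
open scoped BigOperators

/-- Sup-norm `‖δ‖_∞ = max_i |δ_i|` of a vector `δ ∈ ℝⁿ`. -/
noncomputable def supNorm {n : ℕ} (δ : Fin n → ℝ) : ℝ :=
  vecMax (fun i => |δ i|)

lemma le_vecMax {n : ℕ} (x : Fin n → ℝ) (i : Fin n) : x i ≤ vecMax x := by
  have h : (Finset.univ : Finset (Fin n)).Nonempty := ⟨i, Finset.mem_univ i⟩
  rw [vecMax, dif_pos h]
  exact Finset.le_sup' x (Finset.mem_univ i)

lemma exists_vecMax {n : ℕ} (hn : 1 ≤ n) (x : Fin n → ℝ) : ∃ i, vecMax x = x i := by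
  have h : (Finset.univ : Finset (Fin n)).Nonempty :=
    ⟨⟨0, hn⟩, Finset.mem_univ _⟩
  rw [vecMax, dif_pos h]
  obtain ⟨i, _, hi⟩ := Finset.exists_mem_eq_sup' h x
  exact ⟨i, hi⟩

/-- **Deviation bound of the softmax mean under perturbed weights.**
For `x, δ ∈ ℝⁿ` (`n ≥ 1`), `k > 0` and `α ≥ (ln n)/k`:
`max_i x_i - ∑_i softmax(α(x+δ))_i · x_i ≤ 2‖δ‖_∞ + k`. -/
theorem softmax_deviation_bound {n : ℕ} (hn : 1 ≤ n) (x δ : Fin n → ℝ)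
    (k : ℝ) (hk : 0 < k) (α : ℝ) (hα : Real.log n / k ≤ α) :
    vecMax x - ∑ i, softmaxWeight (fun j => x j + δ j) α i * x i ≤
      2 * supNorm δ + k := by
  set y : Fin n → ℝ := fun j => x j + δ j with hy
  set p : Fin n → ℝ := softmaxWeight y α with hpdef
  set S : ℝ := ∑ j, Real.exp (α * y j) with hSdef
  have hnpos : (0:ℕ) < n := hn
  have hnR : (0:ℝ) < n := by exact_mod_cast hnpos
  have hS : 0 < S := Finset.sum_pos (fun j _ => Real.exp_pos _)
    ⟨⟨0, hn⟩, Finset.mem_univ _⟩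
  have hp : ∀ i, 0 < p i := fun i => div_pos (Real.exp_pos _) hS
  have hpsum : ∑ i, p i = 1 := by
    simp only [hpdef, softmaxWeight, ← hSdef]
    rw [← Finset.sum_div, div_self (ne_of_gt hS)]
  have habs : ∀ i, |δ i| ≤ supNorm δ := fun i => le_vecMax (fun j => |δ j|) i
  have hND : 0 ≤ supNorm δ := by
    obtain ⟨i, hi⟩ := exists_vecMax hn (fun i => |δ i|)
    rw [supNorm, hi]; exact abs_nonneg _
  have hlogn : 0 ≤ Real.log n := Real.log_nonneg (by exact_mod_cast hn)
  have hαnn : 0 ≤ α := le_trans (div_nonneg hlogn hk.le) hα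
  -- key: vecMax y - ∑ p i * y i ≤ k
  have key : vecMax y - ∑ i, p i * y i ≤ k := by
    rcases eq_or_lt_of_le hn with hn1 | hn2
    · -- n = 1
      have hsub : Subsingleton (Fin n) := by
        rw [← hn1]; infer_instance
      obtain ⟨i0, hi0⟩ := exists_vecMax hn y
      have hyconst : ∀ i : Fin n, y i = vecMax y := fun i => by
        rw [hi0, Subsingleton.elim i i0]
      have : ∑ i, p i * y i = vecMax y := by
        calc ∑ i, p i * y i = ∑ i, p i * vecMax y := by
              exact Finset.sum_congr rfl fun i _ => by rw [hyconst i]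
          _ = vecMax y := by rw [← Finset.sum_mul, hpsum, one_mul]
      rw [this]; linarith
    · -- 2 ≤ n, so log n > 0, hence α > 0
      have hlogpos : 0 < Real.log n := Real.log_pos (by exact_mod_cast hn2)
      have hαpos : 0 < α := lt_of_lt_of_le (div_pos hlogpos hk) hα
      have hlogS : α * vecMax y ≤ Real.log S := by
        obtain ⟨i, hi⟩ := exists_vecMax hn y
        have h1 : Real.exp (α * y i) ≤ S :=
          Finset.single_le_sum (f := fun j => Real.exp (α * y j))
            (fun j _ => (Real.exp_pos _).le) (Finset.mem_univ i)
        calc α * vecMax y = Real.log (Real.exp (α * y i)) := by rw [hi, Real.log_exp]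
          _ ≤ Real.log S := Real.log_le_log (Real.exp_pos _) h1
      -- entropy bound
      have hent : -Real.log n ≤ ∑ i, p i * Real.log (p i) := by
        have step : ∀ i, p i * (-(Real.log n + Real.log (p i))) ≤ 1/n - p i := by
          intro i
          have hlog : Real.log ((n:ℝ)⁻¹ * (p i)⁻¹) ≤ (n:ℝ)⁻¹ * (p i)⁻¹ - 1 :=
            Real.log_le_sub_one_of_pos (mul_pos (inv_pos.mpr hnR) (inv_pos.mpr (hp i)))
          have hre : Real.log ((n:ℝ)⁻¹ * (p i)⁻¹) = -(Real.log n + Real.log (p i)) := by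
            rw [Real.log_mul (inv_ne_zero hnR.ne') (inv_ne_zero (hp i).ne'), Real.log_inv, Real.log_inv]
            ring
          rw [hre] at hlog
          have h2 := mul_le_mul_of_nonneg_left hlog (hp i).le
          calc p i * (-(Real.log n + Real.log (p i)))
              ≤ p i * ((n:ℝ)⁻¹ * (p i)⁻¹ - 1) := h2
            _ = 1/n - p i := by field_simp [(hp i).ne']
        have hsum : ∑ i, p i * (-(Real.log n + Real.log (p i)))
            ≤ ∑ i : Fin n, (1/(n:ℝ) - p i) :=
          Finset.sum_le_sum fun i _ => step i
        have hrhs : ∑ i : Fin n, (1/(n:ℝ) - p i) = 0 := by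
          rw [Finset.sum_sub_distrib, hpsum, Finset.sum_const, Finset.card_univ,
            Fintype.card_fin]
          field_simp
          rw [nsmul_eq_mul, mul_one_div_cancel hnR.ne', sub_self]
        have hlhs : ∑ i, p i * (-(Real.log n + Real.log (p i)))
            = -Real.log n - ∑ i, p i * Real.log (p i) := by
          calc ∑ i, p i * (-(Real.log n + Real.log (p i)))
              = ∑ i, (-(p i * Real.log n) - p i * Real.log (p i)) :=
                Finset.sum_congr rfl fun i _ => by ring
            _ = -((∑ i, p i) * Real.log n) - ∑ i, p i * Real.log (p i) := by
                rw [Finset.sum_sub_distrib, Finset.sum_neg_distrib, ← Finset.sum_mul]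
            _ = -Real.log n - ∑ i, p i * Real.log (p i) := by rw [hpsum, one_mul]
        rw [hlhs, hrhs] at hsum
        linarith
      have hexp : ∀ i, p i * (α * y i) = p i * Real.log (p i) + p i * Real.log S := by
        intro i
        have h3 : α * y i = Real.log (p i) + Real.log S := by
          have h4 : p i * S = Real.exp (α * y i) := by
            rw [hpdef]; simp only [softmaxWeight, ← hSdef]
            field_simp
          rw [← Real.log_exp (α * y i), ← h4, Real.log_mul (hp i).ne' hS.ne']
        rw [h3]; ring
      have hmean : α * ∑ i, p i * y i = ∑ i, p i * Real.log (p i) + Real.log S := by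
        rw [Finset.mul_sum]
        calc ∑ i, α * (p i * y i) = ∑ i, (p i * Real.log (p i) + p i * Real.log S) := by
              refine Finset.sum_congr rfl fun i _ => ?_
              rw [← hexp i]; ring
          _ = ∑ i, p i * Real.log (p i) + (∑ i, p i) * Real.log S := by
              rw [Finset.sum_add_distrib, ← Finset.sum_mul]
          _ = ∑ i, p i * Real.log (p i) + Real.log S := by rw [hpsum, one_mul]
      have h1 : α * vecMax y - α * ∑ i, p i * y i ≤ Real.log n := by
        rw [hmean]; linarith
      have h2 : Real.log n ≤ α * k := by
        rw [div_le_iff₀ hk] at hα; linarith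
      have h5 : α * (vecMax y - ∑ i, p i * y i) ≤ α * k := by
        rw [mul_sub]; linarith
      exact le_of_mul_le_mul_left h5 hαpos
  -- perturbation absorption
  have hmaxxy : vecMax x ≤ vecMax y + supNorm δ := by
    obtain ⟨i, hi⟩ := exists_vecMax hn x
    rw [hi]
    have hxy : x i = y i - δ i := by simp [hy]
    rw [hxy]
    have h1 : y i ≤ vecMax y := le_vecMax y i
    have h2 : -δ i ≤ |δ i| := neg_le_abs _
    linarith [habs i]
  have hpx : ∑ i, p i * y i - supNorm δ ≤ ∑ i, p i * x i := by
    have heq : ∑ i, p i * x i = ∑ i, p i * y i - ∑ i, p i * δ i := by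
      rw [← Finset.sum_sub_distrib]
      refine Finset.sum_congr rfl fun i _ => ?_
      simp [hy]; ring
    rw [heq]
    have hδ : ∑ i, p i * δ i ≤ supNorm δ := by
      calc ∑ i, p i * δ i ≤ ∑ i, p i * supNorm δ :=
            Finset.sum_le_sum fun i _ => mul_le_mul_of_nonneg_left
              (le_trans (le_abs_self _) (habs i)) (hp i).le
        _ = supNorm δ := by rw [← Finset.sum_mul, hpsum, one_mul]
    linarith
  have hfin : ∑ i, softmaxWeight (fun j => x j + δ j) α i * x i = ∑ i, p i * x i := rfl
  rw [hfin]
  linarith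
end

section
/- For all real numbers λ and x, the following inequality holds: (exp(λ²/2) - 1)·(exp(x²) - 1) ≥ exp(λx) - λx - 1. -/
open Real

/-- `u * exp(u/2) ≤ exp u - 1` for `u ≥ 0`. -/
lemma aux_exp_lower (u : ℝ) (hu : 0 ≤ u) :
    u * Real.exp (u / 2) ≤ Real.exp u - 1 := by
  have hs : u / 2 ≤ Real.sinh (u / 2) := Real.self_le_sinh_iff.2 (by linarith)
  have h1 : Real.exp (u / 2) * Real.exp (u / 2) = Real.exp u := by
    rw [← Real.exp_add]; ring_nf
  have h2 : Real.exp (u / 2) * Real.exp (-(u / 2)) = 1 := by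
    rw [← Real.exp_add]; simp
  have hsinh := Real.sinh_eq (u / 2)
  have hpos : 0 < Real.exp (u / 2) := Real.exp_pos _
  nlinarith [mul_le_mul_of_nonneg_left hs hpos.le]

/-- `exp u - 1 ≤ u * exp u` for `u ≥ 0`. -/
lemma aux_exp_upper (u : ℝ) (hu : 0 ≤ u) :
    Real.exp u - 1 ≤ u * Real.exp u := by
  have h1 : (-u) + 1 ≤ Real.exp (-u) := Real.add_one_le_exp (-u)
  have h2 : Real.exp u * Real.exp (-u) = 1 := by rw [← Real.exp_add]; simp
  nlinarith [Real.exp_pos u]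

/-- Key derivative bound. -/
lemma aux_deriv_nonneg (l x : ℝ) (hl : 0 ≤ l) :
    x * (Real.exp (l * x) - 1) ≤ l * Real.exp (l ^ 2 / 2) * (Real.exp (x ^ 2) - 1) := by
  have hA : x ^ 2 * Real.exp (x ^ 2 / 2) ≤ Real.exp (x ^ 2) - 1 :=
    aux_exp_lower (x ^ 2) (sq_nonneg x)
  have hstep : x * (Real.exp (l * x) - 1) ≤ l * x ^ 2 * Real.exp ((l ^ 2 + x ^ 2) / 2) := by
    rcases le_or_gt 0 x with hx | hx
    · -- here l*x ≥ 0
      have hu : 0 ≤ l * x := mul_nonneg hl hx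
      have h1 : Real.exp (l * x) - 1 ≤ l * x * Real.exp (l * x) := aux_exp_upper _ hu
      have h2 : l * x ≤ (l ^ 2 + x ^ 2) / 2 := by nlinarith [sq_nonneg (l - x)]
      have h3 : Real.exp (l * x) ≤ Real.exp ((l ^ 2 + x ^ 2) / 2) := Real.exp_le_exp.2 h2
      have h4 : x * (Real.exp (l * x) - 1) ≤ x * (l * x * Real.exp (l * x)) :=
        mul_le_mul_of_nonneg_left h1 hx
      have h5 : x * (l * x * Real.exp (l * x)) ≤ l * x ^ 2 * Real.exp ((l ^ 2 + x ^ 2) / 2) := by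
        have : 0 ≤ l * x ^ 2 := mul_nonneg hl (sq_nonneg x)
        nlinarith [Real.exp_pos (l * x)]
      linarith
    · -- x < 0, so l*x ≤ 0
      have hu : l * x ≤ 0 := mul_nonpos_of_nonneg_of_nonpos hl hx.le
      have h1 : l * x + 1 ≤ Real.exp (l * x) := Real.add_one_le_exp _
      -- x*(exp(l*x)-1) ≤ x*(l*x) = l*x^2
      have h2 : x * (Real.exp (l * x) - 1) ≤ l * x ^ 2 := by nlinarith
      have h3 : (1 : ℝ) ≤ Real.exp ((l ^ 2 + x ^ 2) / 2) := by
        rw [← Real.exp_zero]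
        exact Real.exp_le_exp.2 (by positivity)
      have h4 : 0 ≤ l * x ^ 2 := mul_nonneg hl (sq_nonneg x)
      nlinarith
  have hsplit : Real.exp ((l ^ 2 + x ^ 2) / 2) =
      Real.exp (l ^ 2 / 2) * Real.exp (x ^ 2 / 2) := by
    rw [← Real.exp_add]; ring_nf
  have h6 : l * x ^ 2 * Real.exp ((l ^ 2 + x ^ 2) / 2) ≤
      l * Real.exp (l ^ 2 / 2) * (Real.exp (x ^ 2) - 1) := by
    rw [hsplit]
    have hE : 0 < Real.exp (l ^ 2 / 2) := Real.exp_pos _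
    calc l * x ^ 2 * (Real.exp (l ^ 2 / 2) * Real.exp (x ^ 2 / 2))
        = l * Real.exp (l ^ 2 / 2) * (x ^ 2 * Real.exp (x ^ 2 / 2)) := by ring
      _ ≤ l * Real.exp (l ^ 2 / 2) * (Real.exp (x ^ 2) - 1) := by
          apply mul_le_mul_of_nonneg_left hA (mul_nonneg hl hE.le)
  linarith

/-- The main inequality for `l ≥ 0`. -/
lemma subgaussian_mgf_key_ineq_nonneg (x l : ℝ) (hl : 0 ≤ l) :
    Real.exp (l * x) - l * x - 1 ≤
      (Real.exp (l ^ 2 / 2) - 1) * (Real.exp (x ^ 2) - 1) := by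
  set f : ℝ → ℝ := fun t =>
    (Real.exp (t ^ 2 / 2) - 1) * (Real.exp (x ^ 2) - 1) - (Real.exp (t * x) - t * x - 1) with hf
  have hderiv : ∀ t : ℝ, HasDerivAt f
      (t * Real.exp (t ^ 2 / 2) * (Real.exp (x ^ 2) - 1) - (x * Real.exp (t * x) - x)) t := by
    intro t
    have h1 : HasDerivAt (fun t : ℝ => t ^ 2 / 2) t t := by
      have := (hasDerivAt_pow 2 t).div_const 2
      simpa using this
    have h2 : HasDerivAt (fun t : ℝ => Real.exp (t ^ 2 / 2)) (Real.exp (t ^ 2 / 2) * t) t :=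
      h1.exp
    have h3 : HasDerivAt (fun t : ℝ => t * x) x t := by
      simpa using (hasDerivAt_id t).mul_const x
    have h4 : HasDerivAt (fun t : ℝ => Real.exp (t * x)) (Real.exp (t * x) * x) t := h3.exp
    have h5 := (((h2.sub_const 1).mul_const (Real.exp (x ^ 2) - 1)).sub
      ((h4.sub h3).sub_const 1))
    exact h5.congr_deriv (by ring)
  have hmono : MonotoneOn f (Set.Ici (0 : ℝ)) := by
    apply monotoneOn_of_deriv_nonneg (convex_Ici 0)
    · exact fun t _ => ((hderiv t).differentiableAt).continuousAt.continuousWithinAt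
    · exact fun t _ => ((hderiv t).differentiableAt).differentiableWithinAt
    · intro t ht
      rw [interior_Ici] at ht
      rw [(hderiv t).deriv]
      have := aux_deriv_nonneg t x (le_of_lt ht)
      have hx : x * (Real.exp (t * x) - 1) = x * Real.exp (t * x) - x := by ring
      linarith [hx ▸ this]
  have h0 : f 0 = 0 := by simp [hf]
  have := hmono (Set.self_mem_Ici) (Set.mem_Ici.2 hl) hl
  rw [h0] at this
  simp only [hf] at this
  linarith

/-- **Key sub-Gaussian MGF inequality.**
For all real `λ` and `x`:
`(exp(λ²/2) - 1) · (exp(x²) - 1) ≥ exp(λx) - λx - 1`. -/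
theorem subgaussian_mgf_key_ineq (l x : ℝ) :
    Real.exp (l * x) - l * x - 1 ≤
      (Real.exp (l ^ 2 / 2) - 1) * (Real.exp (x ^ 2) - 1) := by
  rcases le_or_gt 0 l with hl | hl
  · exact subgaussian_mgf_key_ineq_nonneg x l hl
  · have h := subgaussian_mgf_key_ineq_nonneg (-x) (-l) (by linarith)
    have e1 : -l * -x = l * x := by ring
    have e2 : (-l) ^ 2 = l ^ 2 := by ring
    have e3 : (-x) ^ 2 = x ^ 2 := by ring
    rw [e1, e2, e3] at h
    exact h
end

section
/- For every real number u, the chain of inequalities (exp(|u|/√2) - 1)² ≥ exp(|u|) - |u| - 1 ≥ exp(u) - u - 1 holds. -/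
open Real in
private lemma phiA : ∀ s ∈ Set.Ici (0:ℝ),
    Real.exp (Real.sqrt 2 * s) - 1 ≤ Real.sqrt 2 * Real.exp (2*s) - Real.sqrt 2 * Real.exp s := by
  have h2 : (0:ℝ) < Real.sqrt 2 := by positivity
  have h2le : Real.sqrt 2 ≤ 2 := by
    nlinarith [Real.sq_sqrt (by norm_num : (2:ℝ) ≥ 0), Real.sqrt_nonneg 2]
  set f : ℝ → ℝ := fun s => Real.sqrt 2 * Real.exp (2*s) - Real.sqrt 2 * Real.exp s - Real.exp (Real.sqrt 2 * s) with hf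
  have hderiv : ∀ x : ℝ, HasDerivAt f
      (Real.sqrt 2 * (Real.exp (2*x) * 2) - Real.sqrt 2 * Real.exp x - Real.exp (Real.sqrt 2 * x) * Real.sqrt 2) x := by
    intro x
    have h1 : HasDerivAt (fun y : ℝ => Real.exp (2*y)) (Real.exp (2*x) * 2) x := by
      simpa [Function.comp_def] using (Real.hasDerivAt_exp (2*x)).comp x ((hasDerivAt_id x).const_mul 2)
    have h3 : HasDerivAt (fun y : ℝ => Real.exp (Real.sqrt 2 * y)) (Real.exp (Real.sqrt 2 * x) * Real.sqrt 2) x := by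
      simpa [Function.comp_def] using (Real.hasDerivAt_exp (Real.sqrt 2 * x)).comp x ((hasDerivAt_id x).const_mul (Real.sqrt 2))
    exact ((h1.const_mul (Real.sqrt 2)).sub ((Real.hasDerivAt_exp x).const_mul (Real.sqrt 2))).sub h3
  have hmono : MonotoneOn f (Set.Ici 0) := by
    apply monotoneOn_of_deriv_nonneg (convex_Ici 0)
    · exact (Continuous.continuousOn (by continuity))
    · intro x hx
      exact (hderiv x).differentiableAt.differentiableWithinAt
    · intro x hx
      rw [interior_Ici] at hx
      rw [(hderiv x).deriv]
      have e1 : Real.exp x ≤ Real.exp (2*x) := Real.exp_le_exp.2 (by linarith [(Set.mem_Ioi.1 hx).le])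
      have e2 : Real.exp (Real.sqrt 2 * x) ≤ Real.exp (2*x) := Real.exp_le_exp.2 (by nlinarith [(Set.mem_Ioi.1 hx).le])
      nlinarith
  intro s hs
  have := hmono (Set.self_mem_Ici) hs hs
  simp only [hf, mul_zero, Real.exp_zero] at this
  linarith

private lemma partB : ∀ a ∈ Set.Ici (0:ℝ),
    Real.exp a - a - 1 ≤ (Real.exp (a / Real.sqrt 2) - 1) ^ 2 := by
  have h2 : (0:ℝ) < Real.sqrt 2 := by positivity
  have hsq : Real.sqrt 2 * Real.sqrt 2 = 2 := Real.mul_self_sqrt (by norm_num)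
  set g : ℝ → ℝ := fun a => (Real.exp (a / Real.sqrt 2) - 1)^2 - Real.exp a + a with hg
  have hderiv : ∀ x : ℝ, HasDerivAt g
      (2 * (Real.exp (x / Real.sqrt 2) - 1) * (Real.exp (x / Real.sqrt 2) * (1 / Real.sqrt 2)) - Real.exp x + 1) x := by
    intro x
    have h1 : HasDerivAt (fun y : ℝ => Real.exp (y / Real.sqrt 2)) (Real.exp (x / Real.sqrt 2) * (1 / Real.sqrt 2)) x := by
      simpa [Function.comp_def] using (Real.hasDerivAt_exp (x / Real.sqrt 2)).comp x ((hasDerivAt_id x).div_const (Real.sqrt 2))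
    have h2' : HasDerivAt (fun y : ℝ => (Real.exp (y / Real.sqrt 2) - 1)^2)
        (2 * (Real.exp (x / Real.sqrt 2) - 1) * (Real.exp (x / Real.sqrt 2) * (1 / Real.sqrt 2))) x := by
      have := ((h1.sub_const 1).pow 2)
      simpa [Pi.pow_def, mul_comm, mul_assoc, mul_left_comm] using this
    simpa [hg, Pi.add_def, Pi.sub_def] using (h2'.sub (Real.hasDerivAt_exp x)).add (hasDerivAt_id x)
  have hmono : MonotoneOn g (Set.Ici 0) := by
    apply monotoneOn_of_deriv_nonneg (convex_Ici 0)
    · exact (Continuous.continuousOn (by continuity))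
    · intro x hx
      exact (hderiv x).differentiableAt.differentiableWithinAt
    · intro x hx
      rw [interior_Ici] at hx
      rw [(hderiv x).deriv]
      have hs : (0:ℝ) ≤ x / Real.sqrt 2 := div_nonneg (le_of_lt (Set.mem_Ioi.1 hx)) h2.le
      have hA := phiA (x / Real.sqrt 2) hs
      have hx2 : Real.sqrt 2 * (x / Real.sqrt 2) = x := by field_simp
      rw [hx2] at hA
      have hx3 : Real.exp (2 * (x / Real.sqrt 2)) = Real.exp (x / Real.sqrt 2) * Real.exp (x / Real.sqrt 2) := by
        rw [← Real.exp_add]; ring_nf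
      rw [hx3] at hA
      have key : 2 * (Real.exp (x / Real.sqrt 2) - 1) * (Real.exp (x / Real.sqrt 2) * (1 / Real.sqrt 2))
          = (Real.sqrt 2 * (Real.exp (x/Real.sqrt 2) * Real.exp (x/Real.sqrt 2)) - Real.sqrt 2 * Real.exp (x/Real.sqrt 2)) := by
        field_simp
        linear_combination (1 - Real.exp (x / Real.sqrt 2)) * hsq
      rw [key]
      linarith
  intro a ha
  have := hmono (Set.self_mem_Ici) ha ha
  simp only [hg, zero_div, Real.exp_zero] at this
  norm_num at this
  linarith

/-- **Elementary exponential inequalities.**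
For every real `u`:
`(exp(|u|/√2) - 1)² ≥ exp(|u|) - |u| - 1 ≥ exp(u) - u - 1`. -/
theorem exp_abs_chain_ineq (u : ℝ) :
    Real.exp u - u - 1 ≤ Real.exp |u| - |u| - 1 ∧
      Real.exp |u| - |u| - 1 ≤ (Real.exp (|u| / Real.sqrt 2) - 1) ^ 2 := by
  constructor
  · rcases le_or_gt 0 u with h | h
    · rw [abs_of_nonneg h]
    · rw [abs_of_neg h]
      have := Real.self_le_sinh_iff.2 (by linarith : (0:ℝ) ≤ -u)
      rw [Real.sinh_eq, neg_neg] at this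
      linarith
  · exact partB |u| (abs_nonneg u)
end

section
/- Let X be a real-valued random variable on a probability space with E[X] = 0 and E[exp(X²)] ≤ 2. Then X is 1-sub-Gaussian: for every λ ∈ ℝ, E[exp(λX)] ≤ exp(λ²/2). -/
open MeasureTheory

open scoped Nat

/-- Shifted exponential series. -/
lemma hasSum_exp_shift (y : ℝ) :
    HasSum (fun n : ℕ => y ^ (n + 2) / ((n + 2)! : ℝ)) (Real.exp y - 1 - y) := by
  have h : HasSum (fun n : ℕ => y ^ n / (n ! : ℝ)) (Real.exp y) := by
    rw [Real.exp_eq_exp_ℝ]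
    exact NormedSpace.expSeries_div_hasSum_exp y
  refine (hasSum_nat_add_iff (f := fun n : ℕ => y ^ n / (n ! : ℝ)) 2).2 ?_
  have h3 : Real.exp y - 1 - y + ∑ i ∈ Finset.range 2, y ^ i / (i ! : ℝ) = Real.exp y := by
    rw [Finset.sum_range_succ, Finset.sum_range_one]
    norm_num
  rw [h3]
  exact h

/-- Cauchy–Schwarz for infinite sums of nonnegative reals. -/
lemma hasSum_cauchy_schwarz {f g : ℕ → ℝ} {A B C : ℝ} (hf : ∀ n, 0 ≤ f n)
    (hg : ∀ n, 0 ≤ g n) (hA : HasSum (fun n => f n ^ 2) A)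
    (hB : HasSum (fun n => g n ^ 2) B) (hC : HasSum (fun n => f n * g n) C) :
    C ≤ Real.sqrt (A * B) := by
  rw [← hC.tsum_eq]
  refine Summable.tsum_le_of_sum_le hC.summable fun s => ?_
  have h1 : (∑ i ∈ s, f i * g i) ^ 2 ≤ (∑ i ∈ s, f i ^ 2) * ∑ i ∈ s, g i ^ 2 :=
    Finset.sum_mul_sq_le_sq_mul_sq s f g
  have h2 : (∑ i ∈ s, f i ^ 2) ≤ A := sum_le_hasSum s (fun i _ => sq_nonneg _) hA
  have h3 : (∑ i ∈ s, g i ^ 2) ≤ B := sum_le_hasSum s (fun i _ => sq_nonneg _) hB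
  have hs2 : (0:ℝ) ≤ ∑ i ∈ s, g i ^ 2 := Finset.sum_nonneg fun i _ => sq_nonneg _
  have hA0 : (0:ℝ) ≤ A := le_trans (Finset.sum_nonneg fun i _ => sq_nonneg (f i)) h2
  have h4 : (∑ i ∈ s, f i * g i) ^ 2 ≤ A * B := by nlinarith
  have h5 : 0 ≤ ∑ i ∈ s, f i * g i :=
    Finset.sum_nonneg fun i _ => mul_nonneg (hf i) (hg i)
  calc ∑ i ∈ s, f i * g i = Real.sqrt ((∑ i ∈ s, f i * g i) ^ 2) := (Real.sqrt_sq h5).symm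
    _ ≤ Real.sqrt (A * B) := Real.sqrt_le_sqrt h4

lemma aux_neg {t : ℝ} (ht : t ≤ 0) :
    Real.exp t - 1 - t ≤ Real.exp (-t) - 1 - (-t) := by
  have hmono : Monotone (fun s : ℝ => Real.exp s - Real.exp (-s) - 2 * s) := by
    apply monotone_of_deriv_nonneg
    · fun_prop
    · intro x
      have h1 : HasDerivAt (fun s : ℝ => 2 * s) 2 x := by
        simpa using (hasDerivAt_id x).const_mul 2
      have hd : HasDerivAt (fun s : ℝ => Real.exp s - Real.exp (-s) - 2 * s)
          (Real.exp x - Real.exp (-x) * (-1) - 2) x :=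
        ((Real.hasDerivAt_exp x).sub ((hasDerivAt_neg x).exp)).sub h1
      rw [hd.deriv, Real.exp_neg]
      have h2 := Real.exp_pos x
      have h3 : Real.exp x * (Real.exp x)⁻¹ = 1 := mul_inv_cancel₀ (ne_of_gt h2)
      nlinarith [sq_nonneg (Real.exp x - 1)]
  have h := hmono ht
  simp only [neg_zero, Real.exp_zero, mul_zero] at h
  linarith

lemma aux_A {u : ℝ} (hu : 0 ≤ u) :
    0 ≤ Real.exp (2 * u) - 4 * Real.exp u + 2 * u + 3 := by
  have hmono : Monotone (fun u : ℝ => Real.exp (2 * u) - 4 * Real.exp u + (2 * u + 3)) := by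
    apply monotone_of_deriv_nonneg
    · fun_prop
    · intro x
      have h1 : HasDerivAt (fun s : ℝ => 2 * s) 2 x := by
        simpa using (hasDerivAt_id x).const_mul 2
      have hd : HasDerivAt (fun u : ℝ => Real.exp (2 * u) - 4 * Real.exp u + (2 * u + 3))
          (Real.exp (2 * x) * 2 - 4 * Real.exp x + 2) x :=
        (h1.exp.sub ((Real.hasDerivAt_exp x).const_mul 4)).add (h1.add_const 3)
      rw [hd.deriv]
      have h2 : Real.exp (2 * x) = Real.exp x * Real.exp x := by
        rw [two_mul, Real.exp_add]
      nlinarith [sq_nonneg (Real.exp x - 1)]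
  have h := hmono hu
  simp only [mul_zero, Real.exp_zero] at h
  linarith

lemma aux_B {s : ℝ} (hs : 0 ≤ s) :
    Real.exp s - 1 - s ≤ Real.exp s ^ 2 / 8 := by
  have hmono : Monotone (fun s : ℝ => Real.exp s ^ 2 / 8 - Real.exp s + (1 + s)) := by
    apply monotone_of_deriv_nonneg
    · fun_prop
    · intro x
      have h0 : HasDerivAt (fun s : ℝ => 1 + s) 1 x := by
        simpa using (hasDerivAt_id x).const_add 1
      have hp : HasDerivAt (fun s : ℝ => Real.exp s ^ 2)
          ((2 : ℕ) * Real.exp x ^ 1 * Real.exp x) x := by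
        simpa using (Real.hasDerivAt_exp x).fun_pow 2
      have hd : HasDerivAt (fun s : ℝ => Real.exp s ^ 2 / 8 - Real.exp s + (1 + s))
          (((2 : ℕ) * Real.exp x ^ 1 * Real.exp x) / 8 - Real.exp x + 1) x :=
        ((hp.div_const 8).sub (Real.hasDerivAt_exp x)).add h0
      rw [hd.deriv]
      push_cast
      nlinarith [sq_nonneg (Real.exp x / 2 - 1)]
  have h := hmono hs
  simp only [Real.exp_zero] at h
  norm_num at h
  linarith

/-- The key pointwise inequality. -/
lemma pointwise_bound (l x : ℝ) :
    Real.exp (l * x) ≤ 1 + l * x + ((Real.exp (l ^ 2 / 2) - 1) / 2) * Real.exp (x ^ 2) := by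
  set a := |l| with ha
  set b := |x| with hb
  have ha0 : 0 ≤ a := abs_nonneg l
  have hb0 : 0 ≤ b := abs_nonneg x
  have hab : 0 ≤ a * b := mul_nonneg ha0 hb0
  have ha2 : a ^ 2 = l ^ 2 := sq_abs l
  have hb2 : b ^ 2 = x ^ 2 := sq_abs x
  -- Step 1: reduce to |l|, |x|
  have step1 : Real.exp (l * x) - 1 - l * x ≤ Real.exp (a * b) - 1 - a * b := by
    rcases le_or_gt 0 (l * x) with h | h
    · have : a * b = l * x := by rw [← abs_mul]; exact abs_of_nonneg h
      rw [this]
    · have habs : a * b = -(l * x) := by rw [← abs_mul]; exact abs_of_neg h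
      rw [habs]
      exact aux_neg h.le
  -- Step 2: Cauchy-Schwarz across the series
  have hfact : ∀ n : ℕ, (0:ℝ) < ((n + 2)! : ℝ) := by
    intro n; exact_mod_cast Nat.factorial_pos (n + 2)
  have hA := hasSum_exp_shift (a ^ 2)
  have hB := hasSum_exp_shift (b ^ 2)
  have hC := hasSum_exp_shift (a * b)
  have step2 : Real.exp (a * b) - 1 - a * b ≤
      Real.sqrt ((Real.exp (a ^ 2) - 1 - a ^ 2) * (Real.exp (b ^ 2) - 1 - b ^ 2)) := by
    refine hasSum_cauchy_schwarz
      (f := fun n => a ^ (n + 2) / Real.sqrt ((n + 2)! : ℝ))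
      (g := fun n => b ^ (n + 2) / Real.sqrt ((n + 2)! : ℝ)) ?_ ?_ ?_ ?_ ?_
    · intro n; positivity
    · intro n; positivity
    · convert hA using 2 with n
      rw [div_pow, Real.sq_sqrt (hfact n).le, ← pow_mul, ← pow_mul, mul_comm]
    · convert hB using 2 with n
      rw [div_pow, Real.sq_sqrt (hfact n).le, ← pow_mul, ← pow_mul, mul_comm]
    · convert hC using 2 with n
      rw [div_mul_div_comm, Real.mul_self_sqrt (hfact n).le, ← mul_pow]
  -- Step 3: bound each factor
  have hAbound : Real.exp (a ^ 2) - 1 - a ^ 2 ≤ 2 * (Real.exp (a ^ 2 / 2) - 1) ^ 2 := by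
    have h := aux_A (u := a ^ 2 / 2) (by positivity)
    have h2 : 2 * (a ^ 2 / 2) = a ^ 2 := by ring
    rw [h2] at h
    have h3 : Real.exp (a ^ 2) = Real.exp (a ^ 2 / 2) * Real.exp (a ^ 2 / 2) := by
      rw [← Real.exp_add]; ring_nf
    nlinarith [h3]
  have hBbound : Real.exp (b ^ 2) - 1 - b ^ 2 ≤ Real.exp (b ^ 2) ^ 2 / 8 :=
    aux_B (by positivity)
  have hA0 : 0 ≤ Real.exp (a ^ 2) - 1 - a ^ 2 := by
    nlinarith [Real.add_one_le_exp (a ^ 2)]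
  have hB0 : 0 ≤ Real.exp (b ^ 2) - 1 - b ^ 2 := by
    nlinarith [Real.add_one_le_exp (b ^ 2)]
  have hexp1 : (1:ℝ) ≤ Real.exp (a ^ 2 / 2) := Real.one_le_exp (by positivity)
  have step3 : Real.sqrt ((Real.exp (a ^ 2) - 1 - a ^ 2) * (Real.exp (b ^ 2) - 1 - b ^ 2))
      ≤ ((Real.exp (a ^ 2 / 2) - 1) / 2) * Real.exp (b ^ 2) := by
    have hle : (Real.exp (a ^ 2) - 1 - a ^ 2) * (Real.exp (b ^ 2) - 1 - b ^ 2)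
        ≤ (((Real.exp (a ^ 2 / 2) - 1) / 2) * Real.exp (b ^ 2)) ^ 2 := by
      have hmm := mul_le_mul hAbound hBbound hB0 (by positivity)
      nlinarith [hmm]
    calc Real.sqrt ((Real.exp (a ^ 2) - 1 - a ^ 2) * (Real.exp (b ^ 2) - 1 - b ^ 2))
        ≤ Real.sqrt ((((Real.exp (a ^ 2 / 2) - 1) / 2) * Real.exp (b ^ 2)) ^ 2) :=
          Real.sqrt_le_sqrt hle
      _ = ((Real.exp (a ^ 2 / 2) - 1) / 2) * Real.exp (b ^ 2) := by
          apply Real.sqrt_sq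
          have : (0:ℝ) ≤ (Real.exp (a ^ 2 / 2) - 1) / 2 := by linarith
          positivity
  rw [ha2, hb2] at step2 step3
  linarith [step1, step2, step3]

/-- **Sub-Gaussianity from a second-moment exponential bound.**
If `X` is a real random variable on a probability space with `E[X] = 0` and
`E[exp(X²)] ≤ 2`, then `X` is 1-sub-Gaussian: for every `λ ∈ ℝ`,
`E[exp(λX)] ≤ exp(λ²/2)`. -/
theorem subgaussian_of_exp_sq_le_two
    {Ω : Type*} [MeasurableSpace Ω] (P : Measure Ω) [IsProbabilityMeasure P]
    (X : Ω → ℝ)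
    (hX : Integrable X P)
    (hX2 : Integrable (fun ω => Real.exp ((X ω) ^ 2)) P)
    (hXexp : ∀ l : ℝ, Integrable (fun ω => Real.exp (l * X ω)) P)
    (hmean : ∫ ω, X ω ∂P = 0)
    (hsq : ∫ ω, Real.exp ((X ω) ^ 2) ∂P ≤ 2) :
    ∀ l : ℝ, ∫ ω, Real.exp (l * X ω) ∂P ≤ Real.exp (l ^ 2 / 2) := by
  intro l
  set α := (Real.exp (l ^ 2 / 2) - 1) / 2 with hα
  have hα0 : 0 ≤ α := by
    have := Real.one_le_exp (show (0:ℝ) ≤ l ^ 2 / 2 by positivity)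
    rw [hα]; linarith
  have hint1 : Integrable (fun ω => 1 + l * X ω) P :=
    (integrable_const 1).add (hX.const_mul l)
  have hint2 : Integrable (fun ω => α * Real.exp ((X ω) ^ 2)) P := hX2.const_mul α
  have hint : Integrable (fun ω => 1 + l * X ω + α * Real.exp ((X ω) ^ 2)) P :=
    hint1.add hint2
  have hmono : ∫ ω, Real.exp (l * X ω) ∂P
      ≤ ∫ ω, (1 + l * X ω + α * Real.exp ((X ω) ^ 2)) ∂P := by
    apply integral_mono (hXexp l) hint
    intro ω
    exact pointwise_bound l (X ω)
  have heq : ∫ ω, (1 + l * X ω + α * Real.exp ((X ω) ^ 2)) ∂P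
      = 1 + l * (∫ ω, X ω ∂P) + α * ∫ ω, Real.exp ((X ω) ^ 2) ∂P := by
    rw [integral_add hint1 hint2, integral_add (integrable_const 1) (hX.const_mul l),
      integral_const_mul, integral_const_mul]
    simp
  rw [heq, hmean] at hmono
  have hfin : α * ∫ ω, Real.exp ((X ω) ^ 2) ∂P ≤ α * 2 :=
    mul_le_mul_of_nonneg_left hsq hα0
  calc ∫ ω, Real.exp (l * X ω) ∂P ≤ 1 + l * 0 + α * 2 := by linarith
    _ = Real.exp (l ^ 2 / 2) := by rw [hα]; ring
end

section
/- Let n, n', m be natural numbers with n ≥ 1 and n ≥ n' ≥ m. Then the ratio of binomial coefficients satisfies C(n', m)/C(n, m) ≤ (1 - m/n)^(n - n'), where the right-hand side is interpreted as a real power with base 1 - m/n ∈ [0, 1]. -/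
lemma choose_ratio_aux (m n : ℕ) (hn : 1 ≤ n) :
    ∀ d n', m ≤ n' → n' + d = n →
      (n'.choose m : ℝ) / (n.choose m : ℝ) ≤ (1 - (m : ℝ) / n) ^ d := by
  intro d
  induction d with
  | zero =>
    intro n' hm he
    simp only [Nat.add_zero] at he
    subst he
    rw [div_self (by exact_mod_cast Nat.choose_pos hm |>.ne'), pow_zero]
  | succ d ih =>
    intro n' hm he
    have h1 : (n' + 1) + d = n := by omega
    have hm1 : m ≤ n' + 1 := Nat.le_succ_of_le hm
    have ih' := ih (n' + 1) hm1 h1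
    have hkey : (n'.choose m : ℝ) * ((n' : ℝ) + 1) =
        ((n' + 1).choose m : ℝ) * (((n' : ℝ) + 1) - m) := by
      have h := Nat.choose_mul_succ_eq n' m
      have h' : ((n'.choose m * (n' + 1) : ℕ) : ℝ) = (((n' + 1).choose m * (n' + 1 - m) : ℕ) : ℝ) := by
        exact_mod_cast congrArg (Nat.cast : ℕ → ℝ) h
      push_cast [Nat.cast_sub hm1] at h'
      linarith [h']
    have hpos : (0 : ℝ) < (n' : ℝ) + 1 := by positivity
    have heq : (n'.choose m : ℝ) = ((n' + 1).choose m : ℝ) * ((((n' : ℝ) + 1) - m) / ((n' : ℝ) + 1)) := by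
      field_simp
      linarith [hkey]
    have hmn : (m : ℝ) ≤ n := by exact_mod_cast (by omega : m ≤ n)
    have hnpos : (0 : ℝ) < n := by exact_mod_cast hn
    have hbase0 : (0 : ℝ) ≤ 1 - (m : ℝ) / n := by
      rw [sub_nonneg]
      exact div_le_one_of_le₀ hmn hnpos.le
    have hfac1 : (((n' : ℝ) + 1) - m) / ((n' : ℝ) + 1) ≤ 1 - (m : ℝ) / n := by
      rw [sub_div, div_self hpos.ne']
      have hle : (m : ℝ) / n ≤ (m : ℝ) / ((n' : ℝ) + 1) := by
        apply div_le_div_of_nonneg_left (by positivity) hpos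
        exact_mod_cast (by omega : n' + 1 ≤ n)
      linarith
    have hfac0 : 0 ≤ (((n' : ℝ) + 1) - m) / ((n' : ℝ) + 1) := by
      apply div_nonneg _ hpos.le
      have : (m : ℝ) ≤ (n' : ℝ) + 1 := by exact_mod_cast hm1
      linarith
    calc (n'.choose m : ℝ) / (n.choose m : ℝ)
        = ((((n' : ℝ) + 1) - m) / ((n' : ℝ) + 1)) * (((n' + 1).choose m : ℝ) / (n.choose m : ℝ)) := by
          rw [heq]; ring
      _ ≤ (1 - (m : ℝ) / n) * (1 - (m : ℝ) / n) ^ d := by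
          apply mul_le_mul hfac1 ih' _ hbase0
          positivity
      _ = (1 - (m : ℝ) / n) ^ (d + 1) := by ring

/-- **Upper bound for a ratio of binomial coefficients.**
For natural numbers `n ≥ 1` and `n ≥ n' ≥ m`:
`C(n', m) / C(n, m) ≤ (1 - m/n) ^ (n - n')`,
where the right-hand side is a real power with base `1 - m/n ∈ [0, 1]`
and exponent `n - n' = n·(1 - n'/n)`. -/
theorem choose_ratio_le_rpow (n n' m : ℕ) (hn : 1 ≤ n) (hm : m ≤ n') (hn' : n' ≤ n) :
    (n'.choose m : ℝ) / (n.choose m : ℝ) ≤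
      (1 - (m : ℝ) / (n : ℝ)) ^ ((n : ℝ) - (n' : ℝ)) := by
  set d := n - n' with hd
  have he : n' + d = n := by omega
  have hexp : (n : ℝ) - (n' : ℝ) = (d : ℝ) := by
    have : (n : ℝ) = (n' : ℝ) + d := by exact_mod_cast he.symm
    linarith
  rw [hexp, Real.rpow_natCast]
  exact choose_ratio_aux m n hn d n' hm he
end

section
/- Let n ≥ 1 and x ∈ ℝ^n satisfy the uniform CDF bound: for every t ∈ ℝ, (1/n)·|{i : max_j x_j - x_i ≥ t}| ≤ max(0, 1 - t/σ) for some σ > 0. Let 1 ≤ m < n. Then for every t ≥ 0, the fraction of m-element subsets A of {1,…,n} satisfying max_{j} x_j - max_{i∈A} x_i ≥ t is at most exp(-(-ln(1 - m/n))·n·t/σ); that is, |{A ⊆ {1,…,n} : |A| = m, max_j x_j - max_{i∈A} x_i ≥ t}| / C(n, m) ≤ exp(-(-ln(1 - m/n))·n·t/σ). -/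
open scoped BigOperators

/-- Maximum of `x` over a finite index set `A` (equal to `max_{i ∈ A} x_i` whenever
`A` is nonempty). -/
noncomputable def subsetMax {n : ℕ} (x : Fin n → ℝ) (A : Finset (Fin n)) : ℝ :=
  if h : A.Nonempty then A.sup' h x else 0


-- step lemma
lemma choose_step (m k n : ℕ) (hk : k + 1 ≤ n) :
    k.choose m * n ≤ (k + 1).choose m * (n - m) := by
  rcases le_or_gt m (k + 1) with hm | hm
  · have hpos : 0 < k + 1 := Nat.succ_pos k
    refine Nat.le_of_mul_le_mul_left ?_ hpos
    have h1 : (k + 1) * (k.choose m * n) = (k.choose m * (k + 1)) * n := by ring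
    have h2 : k.choose m * (k + 1) = (k + 1).choose m * (k + 1 - m) :=
      Nat.choose_mul_succ_eq k m
    rw [h1, h2]
    have h3 : (k + 1 - m) * n ≤ (n - m) * (k + 1) := by
      rw [Nat.sub_mul, Nat.sub_mul, Nat.mul_comm (k + 1) n]
      exact Nat.sub_le_sub_left (Nat.mul_le_mul_left m hk) _
    calc (k + 1).choose m * (k + 1 - m) * n = (k + 1).choose m * ((k + 1 - m) * n) := by ring
      _ ≤ (k + 1).choose m * ((n - m) * (k + 1)) := Nat.mul_le_mul_left _ h3
      _ = (k + 1) * ((k + 1).choose m * (n - m)) := by ring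
  · have : k.choose m = 0 := Nat.choose_eq_zero_of_lt (by omega)
    simp [this]

lemma choose_pow_le (n m : ℕ) : ∀ d k, k + d = n →
    k.choose m * n ^ d ≤ n.choose m * (n - m) ^ d := by
  intro d
  induction d with
  | zero => intro k hk; simp_all
  | succ d ih =>
    intro k hk
    have hk1 : (k + 1) + d = n := by omega
    have step := choose_step m k n (by omega)
    calc k.choose m * n ^ (d + 1) = (k.choose m * n) * n ^ d := by ring
      _ ≤ ((k + 1).choose m * (n - m)) * n ^ d := Nat.mul_le_mul_right _ step
      _ = (n - m) * ((k + 1).choose m * n ^ d) := by ring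
      _ ≤ (n - m) * (n.choose m * (n - m) ^ d) := Nat.mul_le_mul_left _ (ih (k + 1) hk1)
      _ = n.choose m * (n - m) ^ (d + 1) := by ring

open Classical in
/-- **Exponential tail bound for the maximum over a random subset, given a uniform CDF
bound.** Let `x ∈ ℝⁿ` (`n ≥ 1`) satisfy: for every `t ∈ ℝ`, the number of indices `i` with
`max_j x_j - x_i ≥ t` is at most `n · max(0, 1 - t/σ)`, for some `σ > 0`.  Let `1 ≤ m < n`.
Then for every `t ≥ 0`, the fraction of `m`-element subsets `A ⊆ {1,…,n}` with
`max_j x_j - max_{i∈A} x_i ≥ t` is at most `exp(-(-ln(1 - m/n))·n·t/σ)`. -/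
theorem subset_max_tail_bound {n : ℕ} (hn : 1 ≤ n) (x : Fin n → ℝ)
    (σ : ℝ) (hσ : 0 < σ)
    (hcdf : ∀ t : ℝ,
      ((Finset.univ.filter fun i => vecMax x - x i ≥ t).card : ℝ) ≤
        (n : ℝ) * max 0 (1 - t / σ))
    (m : ℕ) (hm : 1 ≤ m) (hmn : m < n)
    (t : ℝ) (ht : 0 ≤ t) :
    ((((Finset.univ : Finset (Fin n)).powersetCard m).filter
        (fun A => vecMax x - subsetMax x A ≥ t)).card : ℝ) / (n.choose m : ℝ) ≤
      Real.exp (-(-Real.log (1 - (m : ℝ) / (n : ℝ))) * (n : ℝ) * t / σ) := by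
  have hn0 : (0 : ℝ) < n := by exact_mod_cast hn
  set M := vecMax x with hM
  set B : Finset (Fin n) := Finset.univ.filter fun i => M - x i ≥ t with hB
  set k := B.card with hk
  have hkn : k ≤ n := by
    simpa using (Finset.card_filter_le Finset.univ fun i => M - x i ≥ t)
  -- the filtered set of subsets is exactly powersetCard m B
  have hset : (((Finset.univ : Finset (Fin n)).powersetCard m).filter
      (fun A => M - subsetMax x A ≥ t)) = B.powersetCard m := by
    ext A
    simp only [Finset.mem_filter, Finset.mem_powersetCard, Finset.subset_univ, true_and, hB]
    constructor
    · rintro ⟨hcard, hge⟩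
      refine ⟨fun i hi => ?_, hcard⟩
      have hne : A.Nonempty := Finset.card_pos.mp (by omega)
      have hsm : subsetMax x A = A.sup' hne x := by simp [subsetMax, hne]
      rw [hsm] at hge
      have hxi : x i ≤ A.sup' hne x := Finset.le_sup' x hi
      simp only [Finset.mem_filter, Finset.mem_univ, true_and]
      have : t ≤ M - A.sup' hne x := hge
      linarith
    · rintro ⟨hsub, hcard⟩
      refine ⟨hcard, ?_⟩
      have hne : A.Nonempty := Finset.card_pos.mp (by omega)
      have hsm : subsetMax x A = A.sup' hne x := by simp [subsetMax, hne]
      rw [hsm]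
      have : A.sup' hne x ≤ M - t := by
        apply Finset.sup'_le
        intro i hi
        have := hsub hi
        simp only [Finset.mem_filter, Finset.mem_univ, true_and] at this
        linarith
      show t ≤ M - A.sup' hne x
      linarith
  have hcard : (((Finset.univ : Finset (Fin n)).powersetCard m).filter
      (fun A => M - subsetMax x A ≥ t)).card = k.choose m := by
    rw [hset, Finset.card_powersetCard]
  rw [hcard]
  by_cases hkm : k < m
  · rw [Nat.choose_eq_zero_of_lt hkm]
    simp only [Nat.cast_zero, zero_div]
    exact le_of_lt (Real.exp_pos _)
  push_neg at hkm
  -- k ≥ m ≥ 1, so max 0 (1 - t/σ) = 1 - t/σ and n*t/σ ≤ n - k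
  have hBcard := hcdf t
  rw [← hB, ← hk] at hBcard
  have hkpos : (0 : ℝ) < k := by exact_mod_cast lt_of_lt_of_le hm hkm
  have hmax : (n : ℝ) * max 0 (1 - t / σ) = (n : ℝ) * (1 - t / σ) := by
    rcases max_cases (0 : ℝ) (1 - t / σ) with ⟨h1, h2⟩ | ⟨h1, h2⟩
    · rw [h1] at hBcard ⊢
      nlinarith
    · rw [h1]
  rw [hmax] at hBcard
  have hntk : (n : ℝ) * t / σ ≤ ((n - k : ℕ) : ℝ) := by
    have hcast : ((n - k : ℕ) : ℝ) = (n : ℝ) - k := by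
      push_cast [hkn]; ring
    rw [hcast, div_le_iff₀ hσ]
    have h1 : (k : ℝ) * σ ≤ (n : ℝ) * (1 - t / σ) * σ :=
      mul_le_mul_of_nonneg_right hBcard hσ.le
    have h2 : (n : ℝ) * (1 - t / σ) * σ = (n : ℝ) * σ - (n : ℝ) * t := by
      field_simp
    linarith
  -- main counting bound
  have hkey := choose_pow_le n m (n - k) k (by omega)
  have hchoose_pos : (0 : ℝ) < (n.choose m : ℝ) := by
    exact_mod_cast Nat.choose_pos (le_of_lt hmn)
  have hnm : ((n - m : ℕ) : ℝ) = (n : ℝ) - m := by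
    push_cast [le_of_lt hmn]; ring
  have hkeyR : (k.choose m : ℝ) * (n : ℝ) ^ (n - k) ≤
      (n.choose m : ℝ) * ((n : ℝ) - m) ^ (n - k) := by
    have := (Nat.cast_le (α := ℝ)).mpr hkey
    push_cast at this
    rwa [hnm] at this
  have hb0 : (0 : ℝ) < ((n : ℝ) - m) / n := by
    apply div_pos _ hn0
    have : (m : ℝ) < n := by exact_mod_cast hmn
    linarith
  have hb1 : ((n : ℝ) - m) / n < 1 := by
    rw [div_lt_one hn0]
    have : (0 : ℝ) < m := by exact_mod_cast hm
    linarith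
  have hfrac : (k.choose m : ℝ) / (n.choose m : ℝ) ≤ (((n : ℝ) - m) / n) ^ (n - k) := by
    rw [div_le_iff₀ hchoose_pos, div_pow, div_mul_eq_mul_div, le_div_iff₀ (by positivity)]
    nlinarith [hkeyR]
  refine hfrac.trans ?_
  -- convert power to exponential
  have hlogb : Real.log (((n : ℝ) - m) / n) = Real.log (1 - (m : ℝ) / n) := by
    congr 1
    field_simp
  have hpow : (((n : ℝ) - m) / n) ^ (n - k) =
      Real.exp (((n - k : ℕ) : ℝ) * Real.log (1 - (m : ℝ) / n)) := by
    rw [Real.exp_nat_mul, ← hlogb, Real.exp_log hb0]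
  rw [hpow, Real.exp_le_exp]
  have hlogneg : Real.log (1 - (m : ℝ) / n) < 0 := by
    rw [← hlogb]
    exact Real.log_neg hb0 hb1
  have hgoal : -(-Real.log (1 - (m : ℝ) / n)) * n * t / σ =
      ((n : ℝ) * t / σ) * Real.log (1 - (m : ℝ) / n) := by ring
  rw [hgoal]
  exact mul_le_mul_of_nonpos_right hntk (le_of_lt hlogneg)
end

section
/- Let n ≥ 1 and x ∈ ℝ^n satisfy the uniform CDF bound: for every t ∈ ℝ, (1/n)·|{i : max_j x_j - x_i ≥ t}| ≤ max(0, 1 - t/σ) for some σ > 0. Let 1 ≤ m < n. Then the average over all m-element subsets A of {1,…,n} of the gap max_j x_j - max_{i∈A} x_i is bounded by σ/((-ln(1 - m/n))·n), which in turn is strictly less than σ/m; that is, (1/C(n,m))·∑_{A ⊆ {1,…,n}, |A| = m} (max_j x_j - max_{i∈A} x_i) ≤ σ/((-ln(1 - m/n))·n) < σ/m. -/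
open scoped BigOperators

/-- **Expected gap to the maximum over a uniformly random subset, given a uniform CDF
bound.** Let `x ∈ ℝⁿ` (`n ≥ 1`) satisfy: for every `t ∈ ℝ`, the number of indices `i` with
`max_j x_j - x_i ≥ t` is at most `n · max(0, 1 - t/σ)`, for some `σ > 0`.  Let `1 ≤ m < n`.
Then the average over all `m`-element subsets `A ⊆ {1,…,n}` of
`max_j x_j - max_{i∈A} x_i` is at most `σ/((-ln(1 - m/n))·n)`, which is strictly less than
`σ/m`. -/
theorem subset_max_expected_gap_bound {n : ℕ} (hn : 1 ≤ n) (x : Fin n → ℝ)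
    (σ : ℝ) (hσ : 0 < σ)
    (hcdf : ∀ t : ℝ,
      ((Finset.univ.filter fun i => vecMax x - x i ≥ t).card : ℝ) ≤
        (n : ℝ) * max 0 (1 - t / σ))
    (m : ℕ) (hm : 1 ≤ m) (hmn : m < n) :
    (1 / (n.choose m : ℝ)) *
        ∑ A ∈ (Finset.univ : Finset (Fin n)).powersetCard m,
          (vecMax x - subsetMax x A) ≤
      σ / ((-Real.log (1 - (m : ℝ) / (n : ℝ))) * (n : ℝ)) ∧
    σ / ((-Real.log (1 - (m : ℝ) / (n : ℝ))) * (n : ℝ)) < σ / (m : ℝ) := by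
  classical
  haveI : Nonempty (Fin n) := ⟨⟨0, hn⟩⟩
  have hnpos : (0:ℝ) < n := by exact_mod_cast hn
  have hmpos : (0:ℝ) < m := by exact_mod_cast hm
  have hmn' : (m:ℝ) < n := by exact_mod_cast hmn
  set L : ℝ := -Real.log (1 - (m : ℝ) / (n : ℝ)) with hLdef
  have hmn0 : (0:ℝ) < (m:ℝ)/n := div_pos hmpos hnpos
  have h1p : (0:ℝ) < 1 - (m:ℝ)/n := by
    have : (m:ℝ)/n < 1 := (div_lt_one hnpos).2 hmn'
    linarith
  -- L > m/n
  have hLlb : (m:ℝ)/n < L := by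
    have h := Real.log_lt_sub_one_of_pos h1p (by intro h; linarith)
    linarith [hLdef.le, hLdef.ge]
  have hLpos : 0 < L := lt_trans hmn0 hLlb
  -- L ≤ m/(n-m)
  have hnm : (0:ℝ) < (n:ℝ) - m := by linarith
  have hLub : L * ((n:ℝ) - m) ≤ m := by
    have hinv : Real.log (1 - (m:ℝ)/n)⁻¹ ≤ (1 - (m:ℝ)/n)⁻¹ - 1 :=
      Real.log_le_sub_one_of_pos (by positivity)
    rw [Real.log_inv] at hinv
    have heq : (1 - (m:ℝ)/n)⁻¹ - 1 = (m:ℝ)/((n:ℝ)-m) := by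
      rw [show (1 - (m:ℝ)/n) = ((n:ℝ)-m)/n by field_simp]
      rw [inv_div]; field_simp; ring
    rw [heq] at hinv
    have hL2 : L ≤ (m:ℝ)/((n:ℝ)-m) := by linarith [hLdef.le, hLdef.ge]
    calc L * ((n:ℝ)-m) ≤ (m:ℝ)/((n:ℝ)-m) * ((n:ℝ)-m) :=
          mul_le_mul_of_nonneg_right hL2 hnm.le
      _ = m := by field_simp
  -- second conjunct
  have hsecond : σ / (L * n) < σ / m := by
    apply div_lt_div_of_pos_left hσ hmpos
    calc (m:ℝ) = (m/n) * n := by field_simp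
      _ < L * n := mul_lt_mul_of_pos_right hLlb hnpos
  refine ⟨?_, hsecond⟩
  -- main bound
  set P := (Finset.univ : Finset (Fin n)).powersetCard m with hP
  have hAne : ∀ A ∈ P, A.Nonempty := by
    intro A hA
    rw [hP, Finset.mem_powersetCard] at hA
    exact Finset.card_pos.1 (hA.2 ▸ hm)
  have hAcard : ∀ A ∈ P, A.card = m := by
    intro A hA; rw [hP, Finset.mem_powersetCard] at hA; exact hA.2
  have key : ∀ A ∈ P, vecMax x - subsetMax x A ≤
      σ * ((Finset.univ.filter fun j => subsetMax x A < x j).card : ℝ) / n := by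
    intro A hA
    have hAn := hAne A hA
    have hsub : subsetMax x A = A.sup' hAn x := by rw [subsetMax, dif_pos hAn]
    set t : ℝ := vecMax x - subsetMax x A with ht
    have hfilter_eq : (Finset.univ.filter fun j => ¬ (vecMax x - x j ≥ t)) =
        (Finset.univ.filter fun j => subsetMax x A < x j) := by
      apply Finset.filter_congr
      intro j _
      constructor
      · intro h; by_contra h2; push_neg at h2; apply h; rw [ht]; linarith
      · intro h h2; rw [ht] at h2; linarith
    have hsplit := Finset.card_filter_add_card_filter_not
      (s := (Finset.univ : Finset (Fin n))) (p := fun j => vecMax x - x j ≥ t)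
    rw [hfilter_eq, Finset.card_univ, Fintype.card_fin] at hsplit
    set c := (Finset.univ.filter fun j => subsetMax x A < x j).card with hc
    set g := (Finset.univ.filter fun j => vecMax x - x j ≥ t).card with hg
    have hAsub : A ⊆ Finset.univ.filter fun j => vecMax x - x j ≥ t := by
      intro i hi
      rw [Finset.mem_filter]
      refine ⟨Finset.mem_univ i, ?_⟩
      have : x i ≤ A.sup' hAn x := Finset.le_sup' x hi
      rw [ht, hsub]; simp only [ge_iff_le]; linarith
    have hmg : m ≤ g := by
      rw [← hAcard A hA]; exact Finset.card_le_card hAsub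
    have hcdft := hcdf t
    rw [← hg] at hcdft
    have hgpos : (0:ℝ) < g := by
      have : 0 < g := lt_of_lt_of_le hm hmg
      exact_mod_cast this
    have hmaxpos : (0:ℝ) < 1 - t/σ := by
      by_contra h
      push_neg at h
      rw [max_eq_left h] at hcdft
      simp at hcdft
      linarith
    rw [max_eq_right hmaxpos.le] at hcdft
    have hgc : (g:ℝ) + c = n := by exact_mod_cast hsplit
    have hdiv : (1 - t/σ) = (σ - t)/σ := by field_simp
    rw [hdiv, ← mul_div_assoc, le_div_iff₀ hσ] at hcdft
    have hcg : (c:ℝ) = n - g := by linarith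
    rw [le_div_iff₀ hnpos, hcg]
    nlinarith [hcdft]
  -- sum of c over subsets is at most choose n (m+1)
  have hsum : ∑ A ∈ P, ((Finset.univ.filter fun j => subsetMax x A < x j).card) ≤
      n.choose (m+1) := by
    rw [← Finset.card_sigma]
    have hle : (P.sigma fun A => Finset.univ.filter fun j => subsetMax x A < x j).card ≤
        ((Finset.univ : Finset (Fin n)).powersetCard (m+1)).card := by
      apply Finset.card_le_card_of_injOn (fun p => insert p.2 p.1)
      · rintro ⟨A, j⟩ hp
        rw [Finset.mem_coe, Finset.mem_sigma] at hp
        obtain ⟨hAP, hj⟩ := hp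
        rw [Finset.mem_filter] at hj
        have hAn := hAne A hAP
        have hsub : subsetMax x A = A.sup' hAn x := by rw [subsetMax, dif_pos hAn]
        have hjA : j ∉ A := by
          intro hjA
          have : x j ≤ A.sup' hAn x := Finset.le_sup' x hjA
          rw [hsub] at hj; linarith [hj.2]
        rw [Finset.mem_coe, Finset.mem_powersetCard]
        exact ⟨Finset.subset_univ _, by
          show (insert j A).card = m + 1
          rw [Finset.card_insert_of_notMem hjA, hAcard A hAP]⟩
      · rintro ⟨A, j⟩ hp ⟨A', j'⟩ hp' heq
        simp only [Finset.mem_coe, Finset.mem_sigma, Finset.mem_filter] at hp hp'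
        obtain ⟨hAP, _, hj⟩ := hp
        obtain ⟨hAP', _, hj'⟩ := hp'
        have heq' : insert j A = insert j' A' := heq
        have hAn := hAne A hAP
        have hAn' := hAne A' hAP'
        have hsub : subsetMax x A = A.sup' hAn x := by rw [subsetMax, dif_pos hAn]
        have hsub' : subsetMax x A' = A'.sup' hAn' x := by rw [subsetMax, dif_pos hAn']
        have hbig : ∀ i ∈ A, x i < x j := by
          intro i hi
          have : x i ≤ A.sup' hAn x := Finset.le_sup' x hi
          rw [hsub] at hj; linarith
        have hbig' : ∀ i ∈ A', x i < x j' := by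
          intro i hi
          have : x i ≤ A'.sup' hAn' x := Finset.le_sup' x hi
          rw [hsub'] at hj'; linarith
        have hjj' : j = j' := by
          by_contra hne
          have h1 : j ∈ insert j' A' := by rw [← heq']; exact Finset.mem_insert_self _ _
          have h2 : j' ∈ insert j A := by rw [heq']; exact Finset.mem_insert_self _ _
          rw [Finset.mem_insert] at h1 h2
          rcases h1 with h1 | h1
          · exact hne h1
          rcases h2 with h2 | h2
          · exact hne h2.symm
          have := hbig' j h1
          have := hbig j' h2
          linarith
        subst hjj'
        have hjA : j ∉ A := fun h => lt_irrefl _ (hbig j h)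
        have hjA' : j ∉ A' := fun h => lt_irrefl _ (hbig' j h)
        have hAA : A = A' := by
          have := congrArg (fun s => Finset.erase s j) heq'
          simpa [Finset.erase_insert hjA, Finset.erase_insert hjA'] using this
        subst hAA
        rfl
    rwa [Finset.card_powersetCard, Finset.card_univ, Fintype.card_fin] at hle
  -- assemble
  have hc1pos : (0:ℝ) < (n.choose m : ℝ) := by
    exact_mod_cast Nat.choose_pos hmn.le
  have hc2nn : (0:ℝ) ≤ (n.choose (m+1) : ℝ) := by positivity
  have hS : ∑ A ∈ P, (vecMax x - subsetMax x A) ≤ σ * (n.choose (m+1) : ℝ) / n := by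
    calc ∑ A ∈ P, (vecMax x - subsetMax x A)
        ≤ ∑ A ∈ P, σ * ((Finset.univ.filter fun j => subsetMax x A < x j).card : ℝ) / n :=
          Finset.sum_le_sum key
      _ = σ / n * ∑ A ∈ P, ((Finset.univ.filter fun j => subsetMax x A < x j).card : ℝ) := by
          rw [Finset.mul_sum]; apply Finset.sum_congr rfl; intros; ring
      _ ≤ σ / n * (n.choose (m+1) : ℝ) := by
          apply mul_le_mul_of_nonneg_left _ (by positivity)
          have h := hsum
          have h2 : ((∑ A ∈ P, (Finset.univ.filter fun j => subsetMax x A < x j).card : ℕ) : ℝ)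
              ≤ ((n.choose (m+1) : ℕ) : ℝ) := by exact_mod_cast h
          rw [Nat.cast_sum] at h2
          exact h2
      _ = σ * (n.choose (m+1) : ℝ) / n := by ring
  have hid : (n.choose (m+1) : ℝ) * ((m:ℝ)+1) = (n.choose m : ℝ) * ((n:ℝ) - m) := by
    have h := Nat.choose_succ_right_eq n m
    have h2 : ((n.choose (m+1) * (m+1) : ℕ) : ℝ) = ((n.choose m * (n-m) : ℕ) : ℝ) := by rw [h]
    push_cast [Nat.cast_sub hmn.le] at h2
    linarith
  have hLc2 : L * (n.choose (m+1) : ℝ) ≤ (n.choose m : ℝ) := by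
    have hstep : L * (n.choose (m+1) : ℝ) * ((m:ℝ)+1) ≤ (n.choose m : ℝ) * ((m:ℝ)+1) := by
      calc L * (n.choose (m+1) : ℝ) * ((m:ℝ)+1)
          = L * ((n.choose (m+1) : ℝ) * ((m:ℝ)+1)) := by ring
        _ = L * ((n.choose m : ℝ) * ((n:ℝ)-m)) := by rw [hid]
        _ = (L * ((n:ℝ)-m)) * (n.choose m : ℝ) := by ring
        _ ≤ (m:ℝ) * (n.choose m : ℝ) := mul_le_mul_of_nonneg_right hLub hc1pos.le
        _ ≤ (n.choose m : ℝ) * ((m:ℝ)+1) := by nlinarith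
    exact le_of_mul_le_mul_right hstep (by positivity)
  have hLn : (0:ℝ) < L * n := by positivity
  rw [one_div, inv_mul_le_iff₀ hc1pos]
  have hfin : σ * (n.choose (m+1) : ℝ) / n ≤ (n.choose m : ℝ) * σ / (L * n) := by
    rw [div_le_div_iff₀ hnpos hLn]
    nlinarith [mul_le_mul_of_nonneg_right hLc2 (by positivity : (0:ℝ) ≤ σ * n)]
  exact le_trans hS (hfin.trans_eq (mul_div_assoc _ _ _))
end

section
/- For every real u ≥ 0, the supremum over λ ∈ (0,1) of the function λ ↦ u·λ - λ²/(1-λ) equals (√(1+u) - 1)². -/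
/-- **Fenchel-type conjugate in the sub-gamma concentration argument.**
For every real `u ≥ 0`, the supremum over `λ ∈ (0,1)` of `λ ↦ u·λ - λ²/(1-λ)`
equals `(√(1+u) - 1)²`. -/
theorem sSup_sub_gamma_conjugate (u : ℝ) (hu : 0 ≤ u) :
    sSup ((fun l : ℝ => u * l - l ^ 2 / (1 - l)) '' Set.Ioo (0 : ℝ) 1) =
      (Real.sqrt (1 + u) - 1) ^ 2 := by
  set s := Real.sqrt (1 + u) with hs
  have hs2 : s ^ 2 = 1 + u := Real.sq_sqrt (by linarith)
  have hs1 : 1 ≤ s := by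
    rw [show (1:ℝ) = Real.sqrt 1 by simp [hs]]
    exact Real.sqrt_le_sqrt (by linarith)
  have hub : ∀ x ∈ (fun l : ℝ => u * l - l ^ 2 / (1 - l)) '' Set.Ioo (0 : ℝ) 1,
      x ≤ (s - 1) ^ 2 := by
    rintro x ⟨l, ⟨hl0, hl1⟩, rfl⟩
    dsimp only
    have h1 : (0:ℝ) < 1 - l := by linarith
    have key : u * l * (1 - l) - l ^ 2 ≤ (s - 1) ^ 2 * (1 - l) := by
      nlinarith [sq_nonneg (s * (1 - l) - 1), sq_nonneg (s - 1)]
    have heq : u * l - l ^ 2 / (1 - l) = (u * l * (1 - l) - l ^ 2) / (1 - l) := by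
      field_simp
    rw [heq, div_le_iff₀ h1]
    linarith
  have hbdd : BddAbove ((fun l : ℝ => u * l - l ^ 2 / (1 - l)) '' Set.Ioo (0 : ℝ) 1) :=
    ⟨(s - 1) ^ 2, hub⟩
  apply le_antisymm
  · exact Real.sSup_le hub (by positivity)
  · rcases eq_or_lt_of_le hu with h0 | h0
    · -- u = 0, sup is 0, approached as l → 0
      have hsval : s = 1 := by rw [hs, ← h0]; simp
      rw [hsval]
      simp only [sub_self, ne_eq, OfNat.ofNat_ne_zero, not_false_eq_true, zero_pow]
      by_contra hc
      push_neg at hc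
      set M := sSup ((fun l : ℝ => u * l - l ^ 2 / (1 - l)) '' Set.Ioo (0 : ℝ) 1) with hM
      set l : ℝ := min (-M / 2) (1/2) with hl
      have hl0 : 0 < l := by
        apply lt_min (by linarith) (by norm_num)
      have hl1 : l < 1 := lt_of_le_of_lt (min_le_right _ _) (by norm_num)
      have hle : u * l - l ^ 2 / (1 - l) ≤ M := le_csSup hbdd ⟨l, ⟨hl0, hl1⟩, rfl⟩
      have hlh : l ≤ 1/2 := min_le_right _ _
      have hlM : l ≤ -M / 2 := min_le_left _ _
      have h1l : (1:ℝ)/2 ≤ 1 - l := by linarith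
      have hdiv : l ^ 2 / (1 - l) ≤ 2 * l ^ 2 := by
        rw [div_le_iff₀ (by linarith)]
        nlinarith
      have : u * l - l ^ 2 / (1 - l) ≥ -2 * l ^ 2 := by nlinarith
      nlinarith
    · -- u > 0: maximum attained at l = 1 - 1/s
      have hs1' : 1 < s := by
        nlinarith
      have hspos : 0 < s := by linarith
      set l : ℝ := 1 - 1 / s with hl
      have hl0 : 0 < l := by
        have : 1 / s < 1 := by rw [div_lt_one hspos]; exact hs1'
        simp only [hl]; linarith
      have hl1 : l < 1 := by
        have : 0 < 1 / s := by positivity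
        simp only [hl]; linarith
      have hval : u * l - l ^ 2 / (1 - l) = (s - 1) ^ 2 := by
        have h1l : 1 - l = 1 / s := by simp [hl]
        rw [h1l, hl]
        have hu' : u = s ^ 2 - 1 := by linarith
        rw [hu']
        field_simp
        ring
      rw [← hval]
      exact le_csSup hbdd ⟨l, ⟨hl0, hl1⟩, rfl⟩
end

section
/- Let (Ω, F, P) be a probability space with a filtration (G_k)_{k≥0} where G_0 = {∅, Ω}, and let (Y_k)_{k≥0} be nonnegative real random variables and (𝟙_k)_{k≥0} be {0,1}-valued random variables such that Y_k and 𝟙_k are G_{k+1}-measurable. Assume the one-sided conditional tail bound: for some C > 0, for all t ≥ 0 and all k, P(Y_k ≥ t | G_k) ≤ exp(-t/C) almost surely. Then for every K ≥ 1 and every δ ∈ (0,1), with probability at least 1 - δ: ∑_{k=0}^{K-1} Y_k·𝟙_k ≤ C·ln(K/δ) · ∑_{k=0}^{K-1} 𝟙_k. -/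
open MeasureTheory
open scoped BigOperators

/-- **Upper bound for a sum of random variables with conditional exponential tails.**
Let `(G_k)` be a filtration with `G_0` trivial, `(Y_k)` nonnegative real random variables
and `(𝟙_k)` `{0,1}`-valued random variables, with `Y_k, 𝟙_k` being `G_{k+1}`-measurable.
Assume the one-sided conditional tail bound: for some `C > 0`, for all `t ≥ 0` and all `k`,
`P(Y_k ≥ t | G_k) ≤ exp(-t/C)` a.s.  Then for every `K ≥ 1` and `δ ∈ (0,1)`, with
probability at least `1 - δ`,
`∑_{k<K} Y_k 𝟙_k ≤ C ln(K/δ) ∑_{k<K} 𝟙_k`. -/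
theorem sum_bound_conditional_exponential_tail
    {Ω : Type*} {m0 : MeasurableSpace Ω} (P : Measure Ω) [IsProbabilityMeasure P]
    (𝒢 : Filtration ℕ m0) (hG0 : 𝒢 0 = ⊥)
    (Y : ℕ → Ω → ℝ) (ind : ℕ → Ω → ℝ) (C : ℝ) (hC : 0 < C)
    (hYmeas : ∀ k, StronglyMeasurable[𝒢 (k + 1)] (Y k))
    (hindmeas : ∀ k, StronglyMeasurable[𝒢 (k + 1)] (ind k))
    (hYnonneg : ∀ k ω, 0 ≤ Y k ω)
    (hind01 : ∀ k ω, ind k ω = 0 ∨ ind k ω = 1)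
    (htail : ∀ (k : ℕ) (t : ℝ), 0 ≤ t → ∀ᵐ ω ∂P,
      (P[Set.indicator {ω' | t ≤ Y k ω'} (fun _ => (1 : ℝ))|𝒢 k]) ω ≤
        Real.exp (-t / C)) :
    ∀ (K : ℕ), 1 ≤ K → ∀ (δ : ℝ), 0 < δ → δ < 1 →
      ENNReal.ofReal (1 - δ) ≤
        P {ω | ∑ k ∈ Finset.range K, Y k ω * ind k ω ≤
            C * Real.log (K / δ) * ∑ k ∈ Finset.range K, ind k ω} := by
  intro K hK δ hδ0 hδ1
  have hKpos : (0:ℝ) < K := by exact_mod_cast Nat.lt_of_lt_of_le Nat.zero_lt_one hK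
  have hKδpos : (0:ℝ) < K / δ := div_pos hKpos hδ0
  have hKδ1 : (1:ℝ) ≤ K / δ := by
    rw [le_div_iff₀ hδ0]; nlinarith [ (show (1:ℝ) ≤ K by exact_mod_cast hK) ]
  set t : ℝ := C * Real.log (K / δ) with ht
  have hlog : 0 ≤ Real.log (K / δ) := Real.log_nonneg hKδ1
  have htnn : 0 ≤ t := mul_nonneg hC.le hlog
  have hexp : Real.exp (-t / C) = δ / K := by
    have h0 : -t / C = -Real.log (K / δ) := by
      rw [ht]; field_simp
    rw [h0, Real.exp_neg, Real.exp_log hKδpos, inv_div]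
  -- bad events
  set S : ℕ → Set Ω := fun k => {ω | t ≤ Y k ω} with hS
  have hSmeas : ∀ k, MeasurableSet (S k) := fun k =>
    measurableSet_le measurable_const (((hYmeas k).mono (𝒢.le (k+1))).measurable)
  have hPk : ∀ k, P (S k) ≤ ENNReal.ofReal (δ / K) := by
    intro k
    have hint : Integrable (Set.indicator (S k) (fun _ => (1:ℝ))) P :=
      (integrable_const (1:ℝ)).indicator (hSmeas k)
    have h1 : ∫ ω, (P[Set.indicator (S k) (fun _ => (1:ℝ))|𝒢 k]) ω ∂P
        = (P (S k)).toReal := by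
      rw [integral_condExp (𝒢.le k)]
      exact integral_indicator_one (hSmeas k)
    have h2 : ∫ ω, (P[Set.indicator (S k) (fun _ => (1:ℝ))|𝒢 k]) ω ∂P
        ≤ ∫ _ : Ω, Real.exp (-t / C) ∂P := by
      refine integral_mono_ae integrable_condExp (integrable_const _) ?_
      exact htail k t htnn
    have h3 : (P (S k)).toReal ≤ δ / K := by
      rw [← h1]
      calc _ ≤ ∫ _ : Ω, Real.exp (-t / C) ∂P := h2
        _ = Real.exp (-t / C) := by simp
        _ = δ / K := hexp
    exact (ENNReal.le_ofReal_iff_toReal_le (measure_ne_top P _)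
      (div_nonneg hδ0.le hKpos.le)).2 h3
  -- union bound
  have hU : P (⋃ k ∈ Finset.range K, S k) ≤ ENNReal.ofReal δ := by
    calc P (⋃ k ∈ Finset.range K, S k) ≤ ∑ k ∈ Finset.range K, P (S k) :=
        measure_biUnion_finset_le _ _
      _ ≤ ∑ _k ∈ Finset.range K, ENNReal.ofReal (δ / K) :=
        Finset.sum_le_sum fun k _ => hPk k
      _ = K * ENNReal.ofReal (δ / K) := by
        rw [Finset.sum_const, Finset.card_range, nsmul_eq_mul]
      _ = ENNReal.ofReal δ := by
        rw [← ENNReal.ofReal_natCast, ← ENNReal.ofReal_mul (by positivity)]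
        rw [mul_div_cancel₀ _ hKpos.ne']
  -- complement is contained in the good set
  have hsub : (⋃ k ∈ Finset.range K, S k)ᶜ ⊆
      {ω | ∑ k ∈ Finset.range K, Y k ω * ind k ω ≤
        C * Real.log (K / δ) * ∑ k ∈ Finset.range K, ind k ω} := by
    intro ω hω
    simp only [Set.compl_iUnion, Set.mem_iInter, Set.mem_compl_iff, hS,
      Set.mem_setOf_eq, not_le] at hω
    simp only [Set.mem_setOf_eq, ← ht, Finset.mul_sum]
    refine Finset.sum_le_sum fun k hk => ?_
    rcases hind01 k ω with h | h
    · simp [h]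
    · simp only [h, mul_one]
      exact (hω k hk).le
  have hmeasU : MeasurableSet (⋃ k ∈ Finset.range K, S k) :=
    MeasurableSet.biUnion (Finset.range K).countable_toSet fun k _ => hSmeas k
  calc ENNReal.ofReal (1 - δ) = 1 - ENNReal.ofReal δ := by
        rw [ENNReal.ofReal_sub _ hδ0.le, ENNReal.ofReal_one]
    _ ≤ 1 - P (⋃ k ∈ Finset.range K, S k) := tsub_le_tsub_left hU _
    _ = P (⋃ k ∈ Finset.range K, S k)ᶜ := (prob_compl_eq_one_sub hmeasU).symm
    _ ≤ _ := measure_mono hsub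
end
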